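/- arXiv:1401.4898 — 2 statements merged into one kernel-verified Lean document; each statement's English description precedes it below -/
import Mathlib

section
/- A surjective linear map U on a normed real vector space V is an isometry if and only if there exists a semi-inner product [·,·] generating the norm such that [U x, U y] = [x, y] for all x, y ∈ V. -/
/-!
Every real normed space carries a semi-inner product: `[x, y] = ‖y‖ f_y x`, where `f_y` is a
norming functional of `y` given by Hahn–Banach. If `U` is an isometry, the sequence
`n ↦ [Uⁿ x, Uⁿ y]` is bounded by `‖x‖ ‖y‖`, and applying a Banach limit (here: the limit of the
Cesàro means along an ultrafilter finer than `atTop`) yields again a semi-inner product generating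
the norm. Shift invariance of the Banach limit makes it `U`-invariant. Conversely, an invariant
semi-inner product gives `‖U x‖² = [U x, U x] = [x, x] = ‖x‖²`.
-/

open Filter Finset Topology

noncomputable section

def cesaroMean (a : ℕ → ℝ) (N : ℕ) : ℝ := (∑ n ∈ range N, a n) / N

lemma cesaroMean_add (a b : ℕ → ℝ) : cesaroMean (a + b) = cesaroMean a + cesaroMean b := by
  ext N
  simp only [cesaroMean, Pi.add_apply, sum_add_distrib, add_div]

lemma cesaroMean_const_mul (c : ℝ) (a : ℕ → ℝ) :
    cesaroMean (fun n => c * a n) = fun N => c * cesaroMean a N := by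
  ext N
  simp only [cesaroMean, ← mul_sum, mul_div_assoc]

lemma cesaroMean_const (c : ℝ) {N : ℕ} (hN : N ≠ 0) : cesaroMean (fun _ => c) N = c := by
  simp [cesaroMean, hN]

lemma abs_cesaroMean_le {a : ℕ → ℝ} {C : ℝ} (ha : ∀ n, |a n| ≤ C) (N : ℕ) :
    |cesaroMean a N| ≤ C := by
  rcases N.eq_zero_or_pos with rfl | hN
  · simpa [cesaroMean] using (abs_nonneg _).trans (ha 0)
  · have hN' : (0 : ℝ) < N := by exact_mod_cast hN
    rw [cesaroMean, abs_div, Nat.abs_cast, div_le_iff₀ hN']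
    calc |∑ n ∈ range N, a n| ≤ ∑ n ∈ range N, |a n| := abs_sum_le_sum_abs _ _
      _ ≤ ∑ _n ∈ range N, C := sum_le_sum fun n _ => ha n
      _ = C * N := by simp [mul_comm]

lemma cesaroMean_shift_sub (a : ℕ → ℝ) (N : ℕ) :
    cesaroMean (fun n => a (n + 1)) N - cesaroMean a N = (a N - a 0) / N := by
  rw [cesaroMean, cesaroMean, ← sub_div, ← sum_sub_distrib, sum_range_sub]

lemma tendsto_cesaroMean_shift_sub {a : ℕ → ℝ} {C : ℝ} (ha : ∀ n, |a n| ≤ C) :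
    Tendsto (fun N => cesaroMean (fun n => a (n + 1)) N - cesaroMean a N) atTop (𝓝 0) := by
  simp only [cesaroMean_shift_sub]
  refine squeeze_zero_norm (fun N => ?_) (tendsto_const_div_atTop_nhds_zero_nat (2 * C))
  rw [Real.norm_eq_abs, abs_div, Nat.abs_cast]
  refine div_le_div_of_nonneg_right ?_ N.cast_nonneg
  calc |a N - a 0| ≤ |a N| + |a 0| := abs_sub _ _
    _ ≤ 2 * C := by linarith [ha N, ha 0]

lemma Ultrafilter.tendsto_limUnder_of_abs_le {α : Type*} (φ : Ultrafilter α) {f : α → ℝ}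
    {C : ℝ} (hf : ∀ i, |f i| ≤ C) : Tendsto f φ (𝓝 (limUnder (φ : Filter α) f)) := by
  have hmaps : ↑(φ.map f) ≤ 𝓟 (Set.Icc (-C) C) :=
    le_principal_iff.mpr (mem_map.mpr (Eventually.of_forall fun i => abs_le.mp (hf i)))
  obtain ⟨L, -, hL⟩ := isCompact_Icc.ultrafilter_le_nhds (φ.map f) hmaps
  exact tendsto_nhds_limUnder ⟨L, hL⟩

/-- A Banach limit when `φ ≤ atTop`; a junk value unless `a` is bounded. -/
def banachLim (φ : Ultrafilter ℕ) (a : ℕ → ℝ) : ℝ := limUnder (φ : Filter ℕ) (cesaroMean a)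

variable {φ : Ultrafilter ℕ}

lemma tendsto_cesaroMean_banachLim {a : ℕ → ℝ} {C : ℝ} (ha : ∀ n, |a n| ≤ C) :
    Tendsto (cesaroMean a) φ (𝓝 (banachLim φ a)) :=
  φ.tendsto_limUnder_of_abs_le (abs_cesaroMean_le ha)

lemma banachLim_add {a b : ℕ → ℝ} {C D : ℝ} (ha : ∀ n, |a n| ≤ C) (hb : ∀ n, |b n| ≤ D) :
    banachLim φ (a + b) = banachLim φ a + banachLim φ b := by
  have hab (n : ℕ) : |(a + b) n| ≤ C + D := (abs_add_le _ _).trans (add_le_add (ha n) (hb n))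
  refine tendsto_nhds_unique (tendsto_cesaroMean_banachLim hab) ?_
  rw [cesaroMean_add]
  exact (tendsto_cesaroMean_banachLim ha).add (tendsto_cesaroMean_banachLim hb)

lemma banachLim_const_mul (c : ℝ) {a : ℕ → ℝ} {C : ℝ} (ha : ∀ n, |a n| ≤ C) :
    banachLim φ (fun n => c * a n) = c * banachLim φ a := by
  have hca (n : ℕ) : |c * a n| ≤ |c| * C := by
    rw [abs_mul]
    exact mul_le_mul_of_nonneg_left (ha n) (abs_nonneg c)
  refine tendsto_nhds_unique (tendsto_cesaroMean_banachLim hca) ?_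
  rw [cesaroMean_const_mul]
  exact (tendsto_cesaroMean_banachLim ha).const_mul c

lemma abs_banachLim_le {a : ℕ → ℝ} {C : ℝ} (ha : ∀ n, |a n| ≤ C) : |banachLim φ a| ≤ C :=
  le_of_tendsto (tendsto_cesaroMean_banachLim ha).abs
    (Eventually.of_forall (abs_cesaroMean_le ha))

lemma banachLim_const (hφ : (φ : Filter ℕ) ≤ atTop) (c : ℝ) : banachLim φ (fun _ => c) = c := by
  refine tendsto_nhds_unique (tendsto_cesaroMean_banachLim fun _ => le_refl |c|) ?_
  refine tendsto_const_nhds.congr' ?_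
  filter_upwards [hφ (eventually_ne_atTop 0)] with N hN
  exact (cesaroMean_const c hN).symm

lemma banachLim_shift (hφ : (φ : Filter ℕ) ≤ atTop) {a : ℕ → ℝ} {C : ℝ} (ha : ∀ n, |a n| ≤ C) :
    banachLim φ (fun n => a (n + 1)) = banachLim φ a := by
  refine tendsto_nhds_unique (tendsto_cesaroMean_banachLim fun n => ha (n + 1)) ?_
  simpa using
    (tendsto_cesaroMean_banachLim ha).add ((tendsto_cesaroMean_shift_sub ha).mono_left hφ)

section SemiInnerProduct

variable {V : Type*} [NormedAddCommGroup V] [NormedSpace ℝ V]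

structure IsSemiInnerProduct (s : V → V → ℝ) : Prop where
  add_left : ∀ x y z, s (x + y) z = s x z + s y z
  smul_left : ∀ (c : ℝ) x y, s (c • x) y = c * s x y
  self_eq : ∀ x, s x x = ‖x‖ ^ 2
  abs_le : ∀ x y, |s x y| ≤ ‖x‖ * ‖y‖

variable (V) in
theorem exists_isSemiInnerProduct : ∃ s : V → V → ℝ, IsSemiInnerProduct s := by
  choose f hf_norm hf_apply using fun y : V => exists_dual_vector'' ℝ y
  refine ⟨fun x y => ‖y‖ * f y x,
    ⟨fun x y z => ?_, fun c x y => ?_, fun x => ?_, fun x y => ?_⟩⟩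
  · rw [map_add, mul_add]
  · rw [map_smul, smul_eq_mul, mul_left_comm]
  · simp [hf_apply, sq]
  · have hfx : |f y x| ≤ ‖x‖ := by
      simpa [← Real.norm_eq_abs] using (f y).le_of_opNorm_le (hf_norm y) x
    rw [abs_mul, abs_norm, mul_comm ‖x‖]
    exact mul_le_mul_of_nonneg_left hfx (norm_nonneg y)

variable {U : V →ₗ[ℝ] V} {s : V → V → ℝ}

lemma norm_pow_apply_of_norm_map (hU : ∀ x, ‖U x‖ = ‖x‖) (n : ℕ) (x : V) :
    ‖(U ^ n) x‖ = ‖x‖ := by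
  induction n with
  | zero => rfl
  | succ n ih => rw [pow_succ', Module.End.mul_apply, hU, ih]

variable (φ U s) in
def banachAverage (x y : V) : ℝ := banachLim φ fun n => s ((U ^ n) x) ((U ^ n) y)

lemma IsSemiInnerProduct.abs_pow_apply_le (hs : IsSemiInnerProduct s)
    (hU : ∀ x, ‖U x‖ = ‖x‖) (x y : V) (n : ℕ) : |s ((U ^ n) x) ((U ^ n) y)| ≤ ‖x‖ * ‖y‖ := by
  simpa only [norm_pow_apply_of_norm_map hU] using hs.abs_le ((U ^ n) x) ((U ^ n) y)

lemma isSemiInnerProduct_banachAverage (hs : IsSemiInnerProduct s) (hU : ∀ x, ‖U x‖ = ‖x‖)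
    (hφ : (φ : Filter ℕ) ≤ atTop) : IsSemiInnerProduct (banachAverage φ U s) where
  add_left x y z := by
    simp only [banachAverage, map_add, hs.add_left]
    exact banachLim_add (hs.abs_pow_apply_le hU x z) (hs.abs_pow_apply_le hU y z)
  smul_left c x y := by
    simp only [banachAverage, map_smul, hs.smul_left]
    exact banachLim_const_mul c (hs.abs_pow_apply_le hU x y)
  self_eq x := by
    simp only [banachAverage, hs.self_eq, norm_pow_apply_of_norm_map hU]
    exact banachLim_const hφ _
  abs_le x y := abs_banachLim_le (hs.abs_pow_apply_le hU x y)

lemma banachAverage_map_map (hs : IsSemiInnerProduct s) (hU : ∀ x, ‖U x‖ = ‖x‖)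
    (hφ : (φ : Filter ℕ) ≤ atTop) (x y : V) :
    banachAverage φ U s (U x) (U y) = banachAverage φ U s x y := by
  have hpow (n : ℕ) (v : V) : (U ^ n) (U v) = (U ^ (n + 1)) v := by
    rw [pow_succ, Module.End.mul_apply]
  simp only [banachAverage, hpow]
  exact banachLim_shift (a := fun n => s ((U ^ n) x) ((U ^ n) y)) hφ
    (hs.abs_pow_apply_le hU x y)

end SemiInnerProduct

end

theorem isometry_iff_preserves_some_sip_general
    {V : Type*} [NormedAddCommGroup V] [NormedSpace ℝ V]
    (U : V →ₗ[ℝ] V) :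
    (∀ x : V, ‖U x‖ = ‖x‖) ↔
    ∃ sip : V → V → ℝ,
      (∀ x y z : V, sip (x + y) z = sip x z + sip y z) ∧
      (∀ (c : ℝ) (x y : V), sip (c • x) y = c * sip x y) ∧
      (∀ x : V, sip x x = ‖x‖ ^ 2) ∧
      (∀ x y : V, |sip x y| ≤ ‖x‖ * ‖y‖) ∧
      (∀ x y : V, sip (U x) (U y) = sip x y) := by
  constructor
  · intro hU
    obtain ⟨s, hs⟩ := exists_isSemiInnerProduct V
    have hφ := Ultrafilter.of_le (atTop : Filter ℕ)
    obtain ⟨add_left, smul_left, self_eq, abs_le⟩ := isSemiInnerProduct_banachAverage hs hU hφ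
    exact ⟨_, add_left, smul_left, self_eq, abs_le, banachAverage_map_map hs hU hφ⟩
  · rintro ⟨s, -, -, self_eq, -, map_map⟩ x
    have hsq : ‖U x‖ ^ 2 = ‖x‖ ^ 2 := by rw [← self_eq, map_map, self_eq]
    exact (pow_left_inj₀ (norm_nonneg _) (norm_nonneg x) two_ne_zero).mp hsq

/-- A surjective linear map `U` on a real normed space is an isometry iff there
is a semi-inner product generating the norm which is preserved by `U`. -/
theorem isometry_iff_preserves_some_sip
    {V : Type*} [NormedAddCommGroup V] [NormedSpace ℝ V]
    (U : V →ₗ[ℝ] V) (hU : Function.Surjective U) :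
    (∀ x : V, ‖U x‖ = ‖x‖) ↔
    ∃ sip : V → V → ℝ,
      (∀ x y z : V, sip (x + y) z = sip x z + sip y z) ∧
      (∀ (c : ℝ) (x y : V), sip (c • x) y = c * sip x y) ∧
      (∀ x : V, sip x x = ‖x‖ ^ 2) ∧
      (∀ x y : V, |sip x y| ≤ ‖x‖ * ‖y‖) ∧
      (∀ x y : V, sip (U x) (U y) = sip x y) :=
  isometry_iff_preserves_some_sip_general U
end

section
/- If the isometry group of a finite-dimensional real normed space acts transitively on the unit sphere, then the norm comes from an inner product (the unit ball is an ellipsoid). -/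
open MeasureTheory

namespace TransIsoAux

variable (V : Type*) [NormedAddCommGroup V] [NormedSpace ℝ V] [FiniteDimensional ℝ V]

/-- The group of isometric units of the endomorphism ring. -/
def isoGrp : Subgroup (V →L[ℝ] V)ˣ where
  carrier := {u | ∀ x : V, ‖(u : V →L[ℝ] V) x‖ = ‖x‖}
  one_mem' := by intro x; simp
  mul_mem' := by
    intro a b ha hb x
    simp only [Units.val_mul, ContinuousLinearMap.mul_apply]
    rw [ha, hb]
  inv_mem' := by
    intro u hu x
    calc ‖(↑u⁻¹ : V →L[ℝ] V) x‖ = ‖(u : V →L[ℝ] V) ((↑u⁻¹ : V →L[ℝ] V) x)‖ := (hu _).symm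
      _ = ‖x‖ := by
          rw [← ContinuousLinearMap.mul_apply, ← Units.val_mul, mul_inv_cancel]
          simp

variable {V}

theorem norm_isoGrp_apply (u : isoGrp V) (x : V) : ‖((u : (V →L[ℝ] V)ˣ) : V →L[ℝ] V) x‖ = ‖x‖ :=
  u.2 x

/-- embedding of units into pairs -/
noncomputable def eRR : (V →L[ℝ] V)ˣ → (V →L[ℝ] V) × (V →L[ℝ] V) :=
  fun u => (↑u, ↑u⁻¹)

theorem isEmbedding_eRR : Topology.IsEmbedding (eRR (V := V)) := by
  have h1 : eRR (V := V) =
      (Homeomorph.prodCongr (Homeomorph.refl _) MulOpposite.opHomeomorph.symm) ∘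
        Units.embedProduct _ := by
    funext u; rfl
  rw [h1]
  exact (Homeomorph.prodCongr (Homeomorph.refl _) MulOpposite.opHomeomorph.symm).isEmbedding.comp
    Units.isEmbedding_embedProduct

theorem isCompact_isoGrp : IsCompact ((isoGrp V : Set (V →L[ℝ] V)ˣ)) := by
  rw [isEmbedding_eRR.isCompact_iff]
  have himg : eRR '' (isoGrp V : Set (V →L[ℝ] V)ˣ) =
      {p : (V →L[ℝ] V) × (V →L[ℝ] V) |
        p.1 * p.2 = 1 ∧ p.2 * p.1 = 1 ∧ ∀ x : V, ‖p.1 x‖ = ‖x‖} := by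
    ext p
    constructor
    · rintro ⟨u, hu, rfl⟩
      refine ⟨?_, ?_, hu⟩
      · show (u : V →L[ℝ] V) * (↑u⁻¹ : V →L[ℝ] V) = 1
        rw [← Units.val_mul, mul_inv_cancel]; rfl
      · show (↑u⁻¹ : V →L[ℝ] V) * (u : V →L[ℝ] V) = 1
        rw [← Units.val_mul, inv_mul_cancel]; rfl
    · rintro ⟨h1, h2, h3⟩
      refine ⟨⟨p.1, p.2, h1, h2⟩, h3, rfl⟩
  rw [himg]
  have hclosed : IsClosed {p : (V →L[ℝ] V) × (V →L[ℝ] V) |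
      p.1 * p.2 = 1 ∧ p.2 * p.1 = 1 ∧ ∀ x : V, ‖p.1 x‖ = ‖x‖} := by
    have hset : {p : (V →L[ℝ] V) × (V →L[ℝ] V) |
        p.1 * p.2 = 1 ∧ p.2 * p.1 = 1 ∧ ∀ x : V, ‖p.1 x‖ = ‖x‖} =
        {p : (V →L[ℝ] V) × (V →L[ℝ] V) | p.1 * p.2 = 1} ∩
          ({p | p.2 * p.1 = 1} ∩ ⋂ x : V, {p | ‖p.1 x‖ = ‖x‖}) := by
      ext p; simp [Set.mem_iInter, and_assoc]
    rw [hset]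
    refine (isClosed_eq (continuous_fst.mul continuous_snd) continuous_const).inter
      ((isClosed_eq (continuous_snd.mul continuous_fst) continuous_const).inter
        (isClosed_iInter fun x => isClosed_eq ?_ continuous_const))
    exact continuous_norm.comp
      ((ContinuousLinearMap.apply ℝ V x).continuous.comp continuous_fst)
  have hsub : {p : (V →L[ℝ] V) × (V →L[ℝ] V) |
      p.1 * p.2 = 1 ∧ p.2 * p.1 = 1 ∧ ∀ x : V, ‖p.1 x‖ = ‖x‖} ⊆
      (Metric.closedBall 0 1) ×ˢ (Metric.closedBall 0 1) := by
    rintro p ⟨h1, _, h3⟩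
    have h2iso : ∀ x : V, ‖p.2 x‖ = ‖x‖ := by
      intro x
      conv_rhs => rw [show ‖x‖ = ‖(p.1 * p.2) x‖ by rw [h1]; simp]
      rw [ContinuousLinearMap.mul_apply, h3]
    constructor
    · simp only [Metric.mem_closedBall, dist_zero_right]
      exact ContinuousLinearMap.opNorm_le_bound _ zero_le_one (fun x => by rw [h3, one_mul])
    · simp only [Metric.mem_closedBall, dist_zero_right]
      exact ContinuousLinearMap.opNorm_le_bound _ zero_le_one (fun x => by rw [h2iso, one_mul])
  exact ((isCompact_closedBall _ _).prod (isCompact_closedBall _ _)).of_isClosed_subset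
    hclosed hsub

instance : CompactSpace (isoGrp V) :=
  isCompact_iff_compactSpace.mp isCompact_isoGrp

end TransIsoAux

open TransIsoAux

/-- If the group of surjective linear isometries of a finite-dimensional real
normed space acts transitively on the unit sphere, then the norm comes from an
inner product. -/
theorem transitive_isometry_group_implies_euclidean
    {V : Type*} [NormedAddCommGroup V] [NormedSpace ℝ V] [FiniteDimensional ℝ V]
    (h_trans : ∀ x y : V, ‖x‖ = 1 → ‖y‖ = 1 → ∃ U : V ≃ₗᵢ[ℝ] V, U x = y) :
    ∃ f : V → V → ℝ,
      (∀ x y : V, f x y = f y x) ∧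
      (∀ x y z : V, f (x + y) z = f x z + f y z) ∧
      (∀ (c : ℝ) (x y : V), f (c • x) y = c * f x y) ∧
      (∀ x : V, f x x = ‖x‖ ^ 2) := by
  classical
  rcases subsingleton_or_nontrivial V with hV | hV
  · refine ⟨fun _ _ => 0, fun _ _ => rfl, fun _ _ _ => by ring, fun _ _ _ => by ring, fun x => ?_⟩
    rw [Subsingleton.elim x 0]; simp
  -- set up the compact group G of linear isometries
  set G := isoGrp V with hG
  letI : MeasurableSpace G := borel G
  haveI : BorelSpace G := ⟨rfl⟩
  set μ : Measure G := MeasureTheory.Measure.haar with hμ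
  haveI : MeasureTheory.IsFiniteMeasure μ := ⟨isCompact_univ.measure_lt_top⟩
  -- the action of g⁻¹
  set act : G → V →L[ℝ] V := fun g => (((g⁻¹ : G) : (V →L[ℝ] V)ˣ) : V →L[ℝ] V) with hact
  have norm_act : ∀ (g : G) (x : V), ‖act g x‖ = ‖x‖ := fun g x => (g⁻¹).2 x
  have act_mul : ∀ (u g : G) (x : V),
      act g ((((u : (V →L[ℝ] V)ˣ)) : V →L[ℝ] V) x) = act (u⁻¹ * g) x := by
    intro u g x
    simp only [hact, mul_inv_rev, inv_inv]
    rw [← ContinuousLinearMap.mul_apply, ← Units.val_mul]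
    rfl
  have continuous_act : Continuous fun g : G => act g := by
    simp only [hact]
    exact Units.continuous_val.comp (continuous_inv.comp continuous_subtype_val)
  -- the averaged bilinear form
  set B : V → V → ℝ := fun x y =>
    inner (𝕜 := ℝ) (toEuclidean (E := V) x) (toEuclidean (E := V) y) with hB
  set φ : V → V → G → ℝ := fun x y g => B (act g x) (act g y) with hφ
  have continuous_φ : ∀ x y, Continuous (φ x y) := by
    intro x y
    apply Continuous.inner
    · exact toEuclidean.continuous_toFun.comp
        (((ContinuousLinearMap.apply ℝ V x).continuous).comp continuous_act)
    · exact toEuclidean.continuous_toFun.comp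
        (((ContinuousLinearMap.apply ℝ V y).continuous).comp continuous_act)
  have integrable_φ : ∀ x y, MeasureTheory.Integrable (φ x y) μ := fun x y =>
    (continuous_φ x y).integrable_of_hasCompactSupport (HasCompactSupport.of_compactSpace _)
  set Q : V → V → ℝ := fun x y => ∫ g, φ x y g ∂μ with hQ
  have Qsymm : ∀ x y, Q x y = Q y x := by
    intro x y
    simp only [hQ]
    congr 1; funext g
    exact real_inner_comm _ _
  have Qadd : ∀ x y z, Q (x + y) z = Q x z + Q y z := by
    intro x y z
    have : φ (x + y) z = fun g => φ x z g + φ y z g := by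
      funext g
      simp only [hφ, hB, map_add, inner_add_left]
    simp only [hQ, this]
    exact MeasureTheory.integral_add (integrable_φ x z) (integrable_φ y z)
  have Qsmul : ∀ (c : ℝ) x y, Q (c • x) y = c * Q x y := by
    intro c x y
    have : φ (c • x) y = fun g => c * φ x y g := by
      funext g
      simp only [hφ, hB, ContinuousLinearMap.map_smul, _root_.map_smul, real_inner_smul_left]
    simp only [hQ, this]
    exact MeasureTheory.integral_const_mul c _
  have Qinv : ∀ (u : G) (x y : V),
      Q ((((u : (V →L[ℝ] V)ˣ)) : V →L[ℝ] V) x) ((((u : (V →L[ℝ] V)ˣ)) : V →L[ℝ] V) y)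
        = Q x y := by
    intro u x y
    have : (φ ((((u : (V →L[ℝ] V)ˣ)) : V →L[ℝ] V) x) ((((u : (V →L[ℝ] V)ˣ)) : V →L[ℝ] V) y))
        = fun g => φ x y (u⁻¹ * g) := by
      funext g
      simp only [hφ, act_mul]
    simp only [hQ, this]
    exact MeasureTheory.integral_mul_left_eq_self (φ x y) u⁻¹
  -- positivity on the sphere
  have Qpos : ∀ x : V, ‖x‖ = 1 → 0 < Q x x := by
    intro x hx
    have hxS : x ∈ Metric.sphere (0 : V) 1 := by simp [hx]
    have hcont : Continuous fun z : V => B z z :=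
      Continuous.inner ((toEuclidean (E := V)).continuous_toFun)
        ((toEuclidean (E := V)).continuous_toFun)
    obtain ⟨z₀, hz₀S, hz₀⟩ :=
      (isCompact_sphere (0 : V) 1).exists_isMinOn ⟨x, hxS⟩ hcont.continuousOn
    have hz₀ne : z₀ ≠ 0 := by
      intro h
      rw [h] at hz₀S
      simp at hz₀S
    have hε : 0 < B z₀ z₀ := by
      have h1 : B z₀ z₀ = ‖toEuclidean (E := V) z₀‖ ^ 2 := real_inner_self_eq_norm_sq _
      rw [h1]
      have : toEuclidean (E := V) z₀ ≠ 0 := by simpa using hz₀ne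
      exact pow_pos (norm_pos_iff.mpr this) 2
    have hle : ∀ g : G, B z₀ z₀ ≤ φ x x g := by
      intro g
      apply hz₀
      simp [Metric.mem_sphere, norm_act g x, hx]
    have hμ1 : 0 < (μ Set.univ).toReal :=
      ENNReal.toReal_pos (isOpen_univ.measure_pos μ ⟨1, trivial⟩).ne'
        (isCompact_univ.measure_lt_top).ne
    have h1 : (μ Set.univ).toReal * (B z₀ z₀) ≤ Q x x := by
      have := MeasureTheory.integral_mono (MeasureTheory.integrable_const (B z₀ z₀))
        (integrable_φ x x) hle
      rwa [MeasureTheory.integral_const, smul_eq_mul] at this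
    exact lt_of_lt_of_le (by positivity) h1
  -- invariance under the isometry group from the hypothesis
  have Qtrans : ∀ x y : V, ‖x‖ = 1 → ‖y‖ = 1 → Q x x = Q y y := by
    intro x y hx hy
    obtain ⟨U, hU⟩ := h_trans x y hx hy
    set uu : (V →L[ℝ] V)ˣ :=
      { val := (U.toContinuousLinearEquiv : V →L[ℝ] V)
        inv := (U.toContinuousLinearEquiv.symm : V →L[ℝ] V)
        val_inv := by
          ext z
          simp only [ContinuousLinearMap.mul_apply, ContinuousLinearEquiv.coe_coe,
            ContinuousLinearMap.one_apply]
          exact U.toContinuousLinearEquiv.apply_symm_apply z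
        inv_val := by
          ext z
          simp only [ContinuousLinearMap.mul_apply, ContinuousLinearEquiv.coe_coe,
            ContinuousLinearMap.one_apply]
          exact U.toContinuousLinearEquiv.symm_apply_apply z } with huu
    have hmem : uu ∈ G := by
      intro z
      simp only [huu]
      simp [U.norm_map]
    have h1 : (((⟨uu, hmem⟩ : G) : (V →L[ℝ] V)ˣ) : V →L[ℝ] V) x = y := by
      simp only [huu]
      simpa using hU
    have := Qinv ⟨uu, hmem⟩ x x
    rw [h1] at this
    exact this.symm
  obtain ⟨v, hv⟩ := exists_ne (0 : V)
  set x₀ : V := ‖v‖⁻¹ • v with hx₀def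
  have hx₀ : ‖x₀‖ = 1 := by
    rw [hx₀def, norm_smul, norm_inv, norm_norm, inv_mul_cancel₀ (norm_ne_zero_iff.mpr hv)]
  set c : ℝ := Q x₀ x₀ with hc
  have hcpos : 0 < c := Qpos x₀ hx₀
  have Qdiag : ∀ x : V, Q x x = ‖x‖ ^ 2 * c := by
    intro x
    rcases eq_or_ne x 0 with rfl | hx
    · have h0 : Q 0 (0 : V) = 0 := by
        have := Qsmul 0 0 0
        simpa using this
      simp [h0]
    · have hnx : ‖x‖ ≠ 0 := norm_ne_zero_iff.mpr hx
      have hunit : ‖(‖x‖⁻¹ • x)‖ = 1 := by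
        rw [norm_smul, norm_inv, norm_norm, inv_mul_cancel₀ hnx]
      have hx' : x = ‖x‖ • (‖x‖⁻¹ • x) := by
        rw [smul_smul, mul_inv_cancel₀ hnx, one_smul]
      calc Q x x = Q (‖x‖ • (‖x‖⁻¹ • x)) (‖x‖ • (‖x‖⁻¹ • x)) := by rw [← hx']
        _ = ‖x‖ * (‖x‖ * Q (‖x‖⁻¹ • x) (‖x‖⁻¹ • x)) := by
            rw [Qsmul, Qsymm, Qsmul, Qsymm]
        _ = ‖x‖ ^ 2 * c := by
            rw [Qtrans (‖x‖⁻¹ • x) x₀ hunit hx₀]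
            ring
  refine ⟨fun x y => Q x y / c, ?_, ?_, ?_, ?_⟩
  · intro x y
    show Q x y / c = Q y x / c
    rw [Qsymm]
  · intro x y z
    show Q (x + y) z / c = Q x z / c + Q y z / c
    rw [Qadd]; ring
  · intro r x y
    show Q (r • x) y / c = r * (Q x y / c)
    rw [Qsmul]; ring
  · intro x
    show Q x x / c = ‖x‖ ^ 2
    rw [Qdiag x]
    field_simp
end
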